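/- arXiv:math/0201037 — 2 statements merged into one kernel-verified Lean document; each statement's English description precedes it below -/
import Mathlib

section
/- Let L be an even lattice of finite rank with a nondegenerate positive definite symmetric integer-valued bilinear form ⟨·|·⟩, and let λ be an element of the dual lattice L°. Then the set Γ_λ = { β ∈ L | ⟨β−α | α+λ⟩ < 0 for all α ∈ L with α ≠ β and α ≠ −λ } is finite. -/
/-!
For `β ∈ Γ_λ` and a basis vector `e`, testing the defining inequality at `α = β + t e` gives
`t (⟨e | β + λ⟩ + t ⟨e | e⟩) > 0` unless `α = -λ`. At most one of `β + e`, `β + 2e` (and of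
`β - e`, `β - 2e`) equals `-λ`, which yields `|⟨e | β + λ⟩| < 2 ⟨e | e⟩`. So the integers
`⟨e_i | β⟩` are bounded, and by positive definiteness they determine `β`.
-/

/-- Coercion of an integer vector to a rational vector. -/
def intVecCast {l : ℕ} (x : Fin l → ℤ) : Fin l → ℚ := fun i => (x i : ℚ)

theorem intVecCast_injective {l : ℕ} : Function.Injective (intVecCast (l := l)) :=
  Int.cast_injective.comp_left

theorem intVecCast_single {l : ℕ} (i : Fin l) :
    intVecCast (Pi.single i 1 : Fin l → ℤ) = Pi.single i 1 := by
  funext j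
  by_cases hj : j = i
  · subst hj; simp [intVecCast]
  · simp [intVecCast, hj]

theorem intVecCast_add_zsmul_single {l : ℕ} (x : Fin l → ℤ) (t : ℤ) (i : Fin l) :
    intVecCast (x + t • Pi.single i 1) = intVecCast x + t • Pi.single i (1 : ℚ) := by
  rw [← intVecCast_single]
  funext j
  simp [intVecCast]

section OrderedField

variable {K : Type*} [Field K] [LinearOrder K]

theorem abs_apply_lt_two_mul_of_apply_neg [IsStrictOrderedRing K] {V : Type*} [AddCommGroup V]
    [Module K V] (B : V →ₗ[K] V →ₗ[K] K) {e w : V} (he : 0 < B e e)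
    (h : ∀ t : ℤ, t ≠ 0 → w + t • e ≠ 0 → B (-(t • e)) (w + t • e) < 0) :
    |B e w| < 2 * B e e := by
  have key : ∀ t : ℤ, t ≠ 0 → w + t • e ≠ 0 → 0 < t * (B e w + t * B e e) := fun t ht hne => by
    have := h t ht hne
    simp only [map_neg, map_zsmul, map_add, LinearMap.neg_apply, LinearMap.smul_apply,
      zsmul_eq_mul] at this
    linarith
  have he0 : e ≠ 0 := by rintro rfl; simp at he
  -- `w + s e` and `w + 2 s e` cannot both vanish, as their difference is `s e`.
  have one_or_two : ∀ s : ℤ, s = 1 ∨ s = -1 → w + s • e ≠ 0 ∨ w + (2 * s) • e ≠ 0 := by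
    rintro s hs
    by_contra! hzero
    apply he0
    have : s • e = 0 := by
      rw [← sub_eq_zero.mpr (hzero.2.trans hzero.1.symm), mul_zsmul]
      module
    rcases hs with rfl | rfl <;> simpa using this
  refine abs_lt.mpr ⟨?_, ?_⟩
  · obtain hne | hne := one_or_two 1 (Or.inl rfl)
    · have := key 1 one_ne_zero hne
      push_cast at this
      linarith
    · have := key 2 two_ne_zero hne
      push_cast at this
      linarith
  · obtain hne | hne := one_or_two (-1) (Or.inr rfl)
    · have := key (-1) (by norm_num) hne
      push_cast at this
      linarith
    · have := key (-2) (by norm_num) (by simpa using hne)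
      push_cast at this
      linarith

theorem eq_of_forall_apply_single_eq {ι : Type*} [Fintype ι] [DecidableEq ι]
    (B : (ι → K) →ₗ[K] (ι → K) →ₗ[K] K) (hpos : ∀ x, x ≠ 0 → 0 < B x x) {v w : ι → K}
    (h : ∀ i, B (Pi.single i 1) v = B (Pi.single i 1) w) : v = w := by
  by_contra hne
  have hflip : B.flip (v - w) = 0 :=
    (Pi.basisFun K ι).ext fun i => by simp [h i]
  have := hpos (v - w) (sub_ne_zero.mpr hne)
  rw [← LinearMap.flip_apply, hflip] at this
  exact this.ne' rfl

end OrderedField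

theorem finite_setOf_abs_apply_single_le {l : ℕ}
    (B : (Fin l → ℚ) →ₗ[ℚ] (Fin l → ℚ) →ₗ[ℚ] ℚ) (hpos : ∀ x, x ≠ 0 → 0 < B x x)
    (hint : ∀ x y : Fin l → ℤ, ∃ z : ℤ, B (intVecCast x) (intVecCast y) = z) (C : Fin l → ℚ) :
    {β : Fin l → ℤ | ∀ i, |B (Pi.single i 1) (intVecCast β)| ≤ C i}.Finite := by
  set F : (Fin l → ℤ) → Fin l → ℤ := fun β i => ⌊B (Pi.single i 1) (intVecCast β)⌋
  have floor_eq : ∀ β i, (F β i : ℚ) = B (Pi.single i 1) (intVecCast β) := by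
    intro β i
    obtain ⟨z, hz⟩ := hint (Pi.single i 1) β
    simp only [F, ← intVecCast_single, hz, Int.floor_intCast]
  have hF : F.Injective := fun β β' hββ' =>
    intVecCast_injective <| eq_of_forall_apply_single_eq B hpos fun i => by
      rw [← floor_eq, ← floor_eq, hββ']
  have hbox : (Set.univ.pi fun i => Set.Icc (-⌈C i⌉) ⌈C i⌉).Finite :=
    Set.Finite.pi fun _ => Set.finite_Icc _ _
  refine (hbox.preimage hF.injOn).subset fun β hβ i _ => ?_
  have hle := abs_le.mp (floor_eq β i ▸ hβ i)
  constructor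
  · exact_mod_cast (neg_le_neg (Int.le_ceil (C i))).trans hle.1
  · exact_mod_cast hle.2.trans (Int.le_ceil (C i))

theorem gamma_lambda_finite_general (l : ℕ)
    (B : (Fin l → ℚ) →ₗ[ℚ] (Fin l → ℚ) →ₗ[ℚ] ℚ)
    (hpos : ∀ x, x ≠ 0 → 0 < B x x)
    (hint : ∀ x y : Fin l → ℤ, ∃ z : ℤ, B (intVecCast x) (intVecCast y) = z)
    (lam : Fin l → ℚ) :
    Set.Finite {β : Fin l → ℤ | ∀ α : Fin l → ℤ, α ≠ β → intVecCast α ≠ -lam →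
      B (intVecCast β - intVecCast α) (intVecCast α + lam) < 0} := by
  refine (finite_setOf_abs_apply_single_le B hpos hint
    fun i => 2 * B (Pi.single i 1) (Pi.single i 1) + |B (Pi.single i 1) lam|).subset
    fun β hβ i => ?_
  set e : Fin l → ℚ := Pi.single i 1
  have hw : |B e (intVecCast β + lam)| < 2 * B e e := by
    refine abs_apply_lt_two_mul_of_apply_neg B (hpos e (by simp [e])) fun t ht hne => ?_
    have hα_ne : intVecCast (β + t • Pi.single i 1) ≠ -lam := by
      rwa [intVecCast_add_zsmul_single, ne_eq, eq_neg_iff_add_eq_zero, add_right_comm]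
    have hα := hβ _ (fun h => ht (by simpa using congrFun h i)) hα_ne
    rwa [intVecCast_add_zsmul_single, sub_add_cancel_left, add_right_comm] at hα
  calc |B e (intVecCast β)| = |B e (intVecCast β + lam) - B e lam| := by
        rw [map_add, add_sub_cancel_right]
    _ ≤ |B e (intVecCast β + lam)| + |B e lam| := abs_sub _ _
    _ ≤ 2 * B e e + |B e lam| := by linarith

/-- For an even lattice `L` of finite rank with a nondegenerate positive
definite symmetric integer-valued bilinear form and `λ ∈ L°`, the set
`Γ_λ = { β ∈ L | ⟨β−α|α+λ⟩ < 0 for all α ∈ L, α ≠ β, α ≠ −λ }` is finite. -/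
theorem gamma_lambda_finite (l : ℕ)
    (B : (Fin l → ℚ) →ₗ[ℚ] (Fin l → ℚ) →ₗ[ℚ] ℚ)
    (hsymm : ∀ x y, B x y = B y x)
    (hpos : ∀ x, x ≠ 0 → 0 < B x x)
    (hint : ∀ x y : Fin l → ℤ, ∃ z : ℤ, B (intVecCast x) (intVecCast y) = z)
    (heven : ∀ x : Fin l → ℤ, ∃ z : ℤ, B (intVecCast x) (intVecCast x) = 2 * z)
    (lam : Fin l → ℚ)
    (hlam : ∀ x : Fin l → ℤ, ∃ z : ℤ, B lam (intVecCast x) = z) :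
    Set.Finite {β : Fin l → ℤ | ∀ α : Fin l → ℤ, α ≠ β → intVecCast α ≠ -lam →
      B (intVecCast β - intVecCast α) (intVecCast α + lam) < 0} :=
  gamma_lambda_finite_general l B hpos hint lam
end

section
/- Let A be a finite-dimensional ℝ-inner product space, L ⊂ A a full-rank lattice, and λ ∈ A. Then the set of γ ∈ λ + L such that ⟨δ | γ − δ⟩ < 0 for every δ ∈ L with δ ≠ 0 and δ ≠ γ is finite. -/
open scoped RealInnerProductSpace

open Bornology Module Set Submodule

/-! The defining inequality, tested at `δ = ±bᵢ`, gives `|⟪bᵢ, γ⟫| ≤ ‖bᵢ‖²` for every basis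
vector `bᵢ` of the lattice. Since `γ = ∑ᵢ ⟪γ, bᵢ⟫ • dᵢ` for the basis `d` dual to `b` under the
inner product, such `γ` form a bounded set, and a coset of a lattice meets a bounded set in
finitely many points. -/

theorem ZSpan.setFinite_inter_setOf_sub_mem {ι E : Type*} [Finite ι] [NormedAddCommGroup E]
    [NormedSpace ℝ E] (b : Basis ι ℝ E) (lam : E) {s : Set E} (hs : IsBounded s) :
    (s ∩ {γ | γ - lam ∈ span ℤ (range b)}).Finite := by
  have := b.finiteDimensional_of_finite
  refine ((ZSpan.setFinite_inter b (hs.vadd (-lam))).preimage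
    (sub_left_injective (b := lam)).injOn).subset ?_
  rintro γ ⟨hγs, hγL⟩
  exact ⟨⟨γ, hγs, by simp [sub_eq_neg_add]⟩, hγL⟩

section InnerProductSpace

variable {E : Type*} [NormedAddCommGroup E] [InnerProductSpace ℝ E]

theorem innerₗ_nondegenerate : LinearMap.BilinForm.Nondegenerate (innerₗ E) :=
  ⟨fun x hx => inner_self_eq_zero.mp (hx x), fun y hy => inner_self_eq_zero.mp (hy y)⟩

theorem isBounded_setOf_abs_inner_le {ι : Type*} [Fintype ι] (b : Basis ι ℝ E) (C : ι → ℝ) :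
    IsBounded {x : E | ∀ i, |⟪b i, x⟫| ≤ C i} := by
  classical
  set d := LinearMap.BilinForm.dualBasis (innerₗ E) innerₗ_nondegenerate b
  refine (Metric.isBounded_iff_subset_closedBall 0).2 ⟨∑ i, C i * ‖d i‖, fun x hx => ?_⟩
  rw [mem_closedBall_zero_iff]
  calc ‖x‖ = ‖∑ i, ⟪x, b i⟫ • d i‖ := by
        conv_lhs => rw [← d.sum_repr x]
        simp [d]
    _ ≤ ∑ i, ‖⟪x, b i⟫ • d i‖ := norm_sum_le _ _
    _ ≤ ∑ i, C i * ‖d i‖ := Finset.sum_le_sum fun i _ => by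
        rw [norm_smul, Real.norm_eq_abs, real_inner_comm]
        exact mul_le_mul_of_nonneg_right (hx i) (norm_nonneg _)

theorem real_inner_le_norm_sq_of_inner_sub_neg {δ γ : E} (h : δ ≠ γ → ⟪δ, γ - δ⟫ < 0) :
    ⟪δ, γ⟫ ≤ ‖δ‖ ^ 2 := by
  rcases eq_or_ne δ γ with rfl | hne
  · exact (real_inner_self_eq_norm_sq δ).le
  · have := h hne
    rw [inner_sub_right, real_inner_self_eq_norm_sq] at this
    linarith

end InnerProductSpace

theorem translated_gamma_finite_general (A : Type*) [NormedAddCommGroup A]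
    [InnerProductSpace ℝ A]
    (n : ℕ) (b : Module.Basis (Fin n) ℝ A) (lam : A) :
    Set.Finite {γ : A |
      γ - lam ∈ Submodule.span ℤ (Set.range ⇑b) ∧
      ∀ δ : A, δ ∈ Submodule.span ℤ (Set.range ⇑b) → δ ≠ 0 → δ ≠ γ →
        ⟪δ, γ - δ⟫ < 0} := by
  refine (ZSpan.setFinite_inter_setOf_sub_mem b lam
    (isBounded_setOf_abs_inner_le b fun i => ‖b i‖ ^ 2)).subset ?_
  rintro γ ⟨hγL, hγ⟩
  have hb (i : Fin n) : b i ∈ span ℤ (range b) := subset_span (mem_range_self i)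
  refine ⟨fun i => abs_le.2 ⟨?_, ?_⟩, hγL⟩
  · have := real_inner_le_norm_sq_of_inner_sub_neg
      (hγ (-b i) (neg_mem (hb i)) (neg_ne_zero.2 (b.ne_zero i)))
    rw [inner_neg_left, norm_neg] at this
    linarith
  · exact real_inner_le_norm_sq_of_inner_sub_neg (hγ (b i) (hb i) (b.ne_zero i))

/-- For a full-rank lattice `L` in a finite-dimensional real inner
product space `A` and `λ ∈ A`, the set of `γ ∈ λ + L` with `⟪δ, γ − δ⟫ < 0` for
every `δ ∈ L`, `δ ≠ 0`, `δ ≠ γ`, is finite. -/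
theorem translated_gamma_finite (A : Type*) [NormedAddCommGroup A]
    [InnerProductSpace ℝ A] [FiniteDimensional ℝ A]
    (n : ℕ) (b : Module.Basis (Fin n) ℝ A) (lam : A) :
    Set.Finite {γ : A |
      γ - lam ∈ Submodule.span ℤ (Set.range ⇑b) ∧
      ∀ δ : A, δ ∈ Submodule.span ℤ (Set.range ⇑b) → δ ≠ 0 → δ ≠ γ →
        ⟪δ, γ - δ⟫ < 0} :=
  translated_gamma_finite_general A n b lam
end
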